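/- For every k ∈ ℕ and every x ∈ A_k = [0, d^{-k}), the first return time r(x) = min{m ≥ 1 : T_α^m(x) ∈ A_k} exists, and writing N = N₀(d^k·x) where N₀(y) is the unique n ∈ ℕ with y ∈ [1−d^{-n}, 1−d^{-(n+1)}) for y ∈ [0,1), one has: r(x) = h_k^α if d^k·x ∈ [1−d^{-N}, 1−2·d^{-(N+1)}), and r(x) = h_k^α + α_{k+N} if d^k·x ∈ [1−2·d^{-(N+1)}, 1−d^{-(N+1)}). -/
import Mathlib


open MeasureTheory Filter Topology Real

noncomputable section

/-- Partial sums `α^{(m-1)} = Σ_{j<m} α_j d^{-(j+1)}`. -/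
def chaconPartial (d : ℕ) (a : ℕ → ℕ) (m : ℕ) : ℝ :=
  ∑ j ∈ Finset.range m, (a j : ℝ) * (d : ℝ) ^ (-(j : ℤ) - 1)

/-- `α' = Σ_{j∈ℕ} α_j d^{-(j+1)}`. -/
def chaconSum (d : ℕ) (a : ℕ → ℕ) : ℝ :=
  ∑' j : ℕ, (a j : ℝ) * (d : ℝ) ^ (-(j : ℤ) - 1)

/-- The index `N(x)` of the unique member `Z_n` of the partition containing `x`:
for `x ∈ [0,1)` it is the unique `n` with `x ∈ [1-d^{-n}, 1-d^{-(n+1)})`, and for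
`x ∈ [1, 1+α')` it is the unique `n` with `x ∈ [1+α^{(n-1)}, 1+α^{(n)})`. -/
def chaconIndex (d : ℕ) (a : ℕ → ℕ) (x : ℝ) : ℕ :=
  if x < 1 then sInf {n : ℕ | x < 1 - (d : ℝ) ^ (-(n : ℤ) - 1)}
  else sInf {n : ℕ | x < 1 + chaconPartial d a (n + 1)}

/-- The Chacon transformation `T_α` on `[0, 1+α')`. -/
def chaconMap (d : ℕ) (a : ℕ → ℕ) (x : ℝ) : ℝ :=
  let n := chaconIndex d a x
  if x < 1 then
    if x < 1 - 2 * (d : ℝ) ^ (-(n : ℤ) - 1) then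
      x - (1 - (d : ℝ) ^ (-(n : ℤ))) + (d : ℝ) ^ (-(n : ℤ) - 1)
    else
      x + 2 * (d : ℝ) ^ (-(n : ℤ) - 1) + chaconPartial d a n
  else
    if 1 + chaconPartial d a (n + 1) - (d : ℝ) ^ (-(n : ℤ) - 1) ≤ x then
      x - (1 + chaconPartial d a (n + 1) - (d : ℝ) ^ (-(n : ℤ) - 1))
        + ((d : ℝ) - 1) * (d : ℝ) ^ (-(n : ℤ) - 1)
    else
      x + (d : ℝ) ^ (-(n : ℤ) - 1)

/-- Heights of the Rokhlin towers: `h_0 = 1`, `h_{k+1} = d h_k + α_k`. -/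
def chaconHeight (d : ℕ) (a : ℕ → ℕ) : ℕ → ℕ
  | 0 => 1
  | k + 1 => d * chaconHeight d a k + a k

variable {d : ℕ} {a : ℕ → ℕ}

lemma hD1 (hd7 : 7 ≤ d) : (1:ℝ) < d := by
  have : (7:ℝ) ≤ d := by exact_mod_cast hd7
  linarith

lemma zp_pos (hd7 : 7 ≤ d) (e : ℤ) : 0 < (d:ℝ) ^ e := zpow_pos (by have := hD1 hd7; linarith) e

lemma cP_succ (m : ℕ) : chaconPartial d a (m+1)
    = chaconPartial d a m + (a m : ℝ) * (d:ℝ) ^ (-(m:ℤ)-1) := Finset.sum_range_succ _ _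

lemma cP_nonneg (hd7 : 7 ≤ d) (m : ℕ) : 0 ≤ chaconPartial d a m := by
  apply Finset.sum_nonneg
  intro j _
  have h1 := (zp_pos hd7 (-(j:ℤ)-1)).le
  positivity

lemma cP_mono (hd7 : 7 ≤ d) {m n : ℕ} (h : m ≤ n) :
    chaconPartial d a m ≤ chaconPartial d a n := by
  apply Finset.sum_le_sum_of_subset_of_nonneg (Finset.range_subset_range.2 h)
  intro j _ _
  have h1 := (zp_pos hd7 (-(j:ℤ)-1)).le
  positivity

lemma index_lt (hd7 : 7 ≤ d) {x : ℝ} {n : ℕ}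
    (h1 : 1 - (d:ℝ) ^ (-(n:ℤ)) ≤ x) (h2 : x < 1 - (d:ℝ) ^ (-(n:ℤ)-1)) :
    chaconIndex d a x = n := by
  have hx1 : x < 1 := h2.trans_le (by have := zp_pos hd7 (-(n:ℤ)-1); linarith)
  rw [chaconIndex, if_pos hx1]
  refine le_antisymm (Nat.sInf_le h2) ?_
  by_contra h
  push_neg at h
  have hmem := Nat.sInf_mem (⟨n, h2⟩ : Set.Nonempty {m : ℕ | x < 1 - (d:ℝ) ^ (-(m:ℤ)-1)})
  set m := sInf {m : ℕ | x < 1 - (d:ℝ) ^ (-(m:ℤ)-1)} with hm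
  have hle : (d:ℝ) ^ (-(n:ℤ)) ≤ (d:ℝ) ^ (-(m:ℤ)-1) := by
    apply zpow_le_zpow_right₀ (le_of_lt (hD1 hd7))
    omega
  have : x < 1 - (d:ℝ) ^ (-(m:ℤ)-1) := hmem
  linarith

lemma index_ge (hd7 : 7 ≤ d) (ha : ∀ j, a j = 1 ∨ a j = 2) {x : ℝ} {n : ℕ}
    (h1 : 1 + chaconPartial d a n ≤ x) (h2 : x < 1 + chaconPartial d a (n+1)) :
    chaconIndex d a x = n := by
  have hx1 : ¬ x < 1 := by have := cP_nonneg (a := a) hd7 n; push_neg; linarith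
  rw [chaconIndex, if_neg hx1]
  refine le_antisymm (Nat.sInf_le h2) ?_
  by_contra h
  push_neg at h
  have hmem := Nat.sInf_mem (⟨n, h2⟩ : Set.Nonempty {m : ℕ | x < 1 + chaconPartial d a (m + 1)})
  set m := sInf {m : ℕ | x < 1 + chaconPartial d a (m+1)} with hm
  have hle : chaconPartial d a (m+1) ≤ chaconPartial d a n := cP_mono hd7 (by omega)
  have : x < 1 + chaconPartial d a (m+1) := hmem
  linarith

lemma zp_mul (hd7 : 7 ≤ d) (n : ℤ) : (d:ℝ) ^ n = (d:ℝ) * (d:ℝ) ^ (n - 1) := by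
  have h0 : (d:ℝ) ≠ 0 := by have := hD1 hd7; linarith
  rw [show n = (n-1)+1 by ring, zpow_add₀ h0, zpow_one]
  ring

lemma mapT1 (hd7 : 7 ≤ d) {x : ℝ} {n : ℕ}
    (h1 : 1 - (d:ℝ) ^ (-(n:ℤ)) ≤ x) (h2 : x < 1 - 2 * (d:ℝ) ^ (-(n:ℤ)-1)) :
    chaconMap d a x = x - (1 - (d:ℝ) ^ (-(n:ℤ))) + (d:ℝ) ^ (-(n:ℤ)-1) := by
  have hp := zp_pos (d := d) hd7 (-(n:ℤ)-1)
  have h2' : x < 1 - (d:ℝ) ^ (-(n:ℤ)-1) := by linarith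
  have hi : chaconIndex d a x = n := index_lt hd7 h1 h2'
  have hx1 : x < 1 := by linarith
  simp only [chaconMap, hi]
  rw [if_pos hx1, if_pos h2]

lemma mapT2 (hd7 : 7 ≤ d) {x : ℝ} {n : ℕ}
    (h1 : 1 - 2 * (d:ℝ) ^ (-(n:ℤ)-1) ≤ x) (h2 : x < 1 - (d:ℝ) ^ (-(n:ℤ)-1)) :
    chaconMap d a x = x + 2 * (d:ℝ) ^ (-(n:ℤ)-1) + chaconPartial d a n := by
  have hp := zp_pos (d := d) hd7 (-(n:ℤ)-1)
  have hD : (7:ℝ) ≤ d := by exact_mod_cast hd7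
  have h1' : 1 - (d:ℝ) ^ (-(n:ℤ)) ≤ x := by
    have h := zp_mul hd7 (-(n:ℤ))
    nlinarith [mul_nonneg (by linarith : (0:ℝ) ≤ (d:ℝ) - 2) hp.le]
  have hi : chaconIndex d a x = n := index_lt hd7 h1' h2
  have hx1 : x < 1 := by linarith
  simp only [chaconMap, hi]
  rw [if_pos hx1, if_neg (by linarith)]

lemma mapT3 (hd7 : 7 ≤ d) (ha : ∀ j, a j = 1 ∨ a j = 2) {x : ℝ} {n : ℕ}
    (h1 : 1 + chaconPartial d a (n+1) - (d:ℝ) ^ (-(n:ℤ)-1) ≤ x)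
    (h2 : x < 1 + chaconPartial d a (n+1)) :
    chaconMap d a x = x - (1 + chaconPartial d a (n+1) - (d:ℝ) ^ (-(n:ℤ)-1))
      + ((d:ℝ) - 1) * (d:ℝ) ^ (-(n:ℤ)-1) := by
  have hp := zp_pos (d := d) hd7 (-(n:ℤ)-1)
  have han : (1:ℝ) ≤ a n := by rcases ha n with h | h <;> rw [h] <;> norm_num
  have hcs := cP_succ (d := d) (a := a) n
  have h1' : 1 + chaconPartial d a n ≤ x := by nlinarith
  have hi : chaconIndex d a x = n := index_ge hd7 ha h1' h2
  have hx1 : ¬ x < 1 := by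
    have h0 := cP_nonneg (a := a) hd7 n
    push_neg
    nlinarith
  simp only [chaconMap, hi]
  rw [if_neg hx1, if_pos h1]

lemma mapT4 (hd7 : 7 ≤ d) (ha : ∀ j, a j = 1 ∨ a j = 2) {x : ℝ} {n : ℕ} (haN : a n = 2)
    (h1 : 1 + chaconPartial d a n ≤ x)
    (h2 : x < 1 + chaconPartial d a n + (d:ℝ) ^ (-(n:ℤ)-1)) :
    chaconMap d a x = x + (d:ℝ) ^ (-(n:ℤ)-1) := by
  have hp := zp_pos (d := d) hd7 (-(n:ℤ)-1)
  have hcs := cP_succ (d := d) (a := a) n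
  rw [haN] at hcs
  have h2' : x < 1 + chaconPartial d a (n+1) := by push_cast at hcs; linarith
  have hi : chaconIndex d a x = n := index_ge hd7 ha h1 h2'
  have hx1 : ¬ x < 1 := by have := cP_nonneg (a := a) hd7 n; push_neg; linarith
  simp only [chaconMap, hi]
  rw [if_neg hx1, if_neg (by push_cast at hcs; push_neg; linarith)]

lemma pow_mul_zpow (hd7 : 7 ≤ d) (k : ℕ) (m : ℤ) :
    (d:ℝ) ^ k * (d:ℝ) ^ m = (d:ℝ) ^ ((k:ℤ) + m) := by
  have h0 : (d:ℝ) ≠ 0 := by have := hD1 hd7; linarith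
  rw [← zpow_natCast, ← zpow_add₀ h0]

set_option maxHeartbeats 1000000 in
lemma chacon_key (hd7 : 7 ≤ d) (ha : ∀ j, a j = 1 ∨ a j = 2) (k : ℕ) :
    ∀ x : ℝ, 0 ≤ x → ∀ N : ℕ,
    1 - (d:ℝ) ^ (-(N:ℤ)) ≤ (d:ℝ) ^ k * x → (d:ℝ) ^ k * x < 1 - (d:ℝ) ^ (-(N:ℤ)-1) →
    ∀ r : ℕ,
    (((d:ℝ) ^ k * x < 1 - 2 * (d:ℝ) ^ (-(N:ℤ)-1) ∧ r = chaconHeight d a k) ∨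
     (1 - 2 * (d:ℝ) ^ (-(N:ℤ)-1) ≤ (d:ℝ) ^ k * x ∧ r = chaconHeight d a k + a (k+N))) →
    (d:ℝ) ^ k * (chaconMap d a)^[r] x
      = (d:ℝ) ^ k * x - (1 - (d:ℝ) ^ (-(N:ℤ))) + (d:ℝ) ^ (-(N:ℤ)-1) ∧
    ∀ i, 0 < i → i < r → 1 ≤ (d:ℝ) ^ k * (chaconMap d a)^[i] x := by
  induction k with
  | zero =>
    intro x hx N h1 h2 r hr
    simp only [pow_zero, one_mul] at h1 h2 hr ⊢
    have hh : chaconHeight d a 0 = 1 := rfl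
    have hp := zp_pos (d := d) hd7 (-(N:ℤ)-1)
    have hmul := zp_mul hd7 (-(N:ℤ))
    have hD : (7:ℝ) ≤ d := by exact_mod_cast hd7
    rcases hr with ⟨hc, hr⟩ | ⟨hc, hr⟩
    · subst hr
      rw [hh]
      refine ⟨?_, by omega⟩
      rw [Function.iterate_one, mapT1 hd7 h1 hc]
    · subst hr
      rw [hh]
      have hT1 : chaconMap d a x = x + 2 * (d:ℝ)^(-(N:ℤ)-1) + chaconPartial d a N :=
        mapT2 hd7 hc h2
      have hcP0 := cP_nonneg (a := a) hd7 N
      have hcs := cP_succ (d := d) (a := a) N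
      have hzN : (0:ℕ) + N = N := by omega
      rw [hzN]
      rcases ha N with haN | haN
      · -- a N = 1, two steps
        rw [haN] at hcs ⊢
        push_cast at hcs
        have h3 : 1 + chaconPartial d a (N+1) - (d:ℝ)^(-(N:ℤ)-1) ≤ chaconMap d a x := by
          rw [hT1]; linarith
        have h4 : chaconMap d a x < 1 + chaconPartial d a (N+1) := by
          rw [hT1]; linarith
        have hT2 := mapT3 hd7 ha h3 h4
        constructor
        · show (chaconMap d a)^[1+1] x = _
          rw [Function.iterate_add_apply]
          show chaconMap d a (chaconMap d a x) = _
          rw [hT2, hT1]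
          linarith
        · intro i h0 h1'
          have : i = 1 := by omega
          subst this
          rw [Function.iterate_one, hT1]
          linarith
      · -- a N = 2, three steps
        rw [haN] at hcs ⊢
        push_cast at hcs
        have h3 : 1 + chaconPartial d a N ≤ chaconMap d a x := by rw [hT1]; linarith
        have h4 : chaconMap d a x < 1 + chaconPartial d a N + (d:ℝ)^(-(N:ℤ)-1) := by
          rw [hT1]; linarith
        have hT2 := mapT4 hd7 ha haN h3 h4
        have h5 : 1 + chaconPartial d a (N+1) - (d:ℝ)^(-(N:ℤ)-1)
            ≤ chaconMap d a (chaconMap d a x) := by rw [hT2, hT1]; linarith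
        have h6 : chaconMap d a (chaconMap d a x) < 1 + chaconPartial d a (N+1) := by
          rw [hT2, hT1]; linarith
        have hT3 := mapT3 hd7 ha h5 h6
        constructor
        · show (chaconMap d a)^[1+2] x = _
          rw [Function.iterate_add_apply]
          show (chaconMap d a) ((chaconMap d a) ((chaconMap d a) x)) = _
          rw [hT3, hT2, hT1]
          linarith
        · intro i h0 h1'
          interval_cases i
          · rw [Function.iterate_one, hT1]; linarith
          · show 1 ≤ (chaconMap d a) ((chaconMap d a) x)
            rw [hT2, hT1]; linarith
  | succ k IH =>
    intro x hx N h1 h2 r hr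
    have hD : (7:ℝ) ≤ d := by exact_mod_cast hd7
    have hq1 : (1:ℝ) < d := by linarith
    have hq0 : (0:ℝ) < d := by linarith
    have hne : (d:ℝ) ≠ 0 := ne_of_gt hq0
    have hv0 : (0:ℝ) < (d:ℝ)⁻¹ := by positivity
    have hinv : (d:ℝ) * (d:ℝ)⁻¹ = 1 := mul_inv_cancel₀ hne
    have hpos := zp_pos (d := d) hd7
    set T := chaconMap d a with hT
    set h := chaconHeight d a k with hh
    set y := (d:ℝ)^k * x with hy
    have hy0 : 0 ≤ y := mul_nonneg (pow_nonneg hq0.le k) hx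
    have hyx : (d:ℝ)^(k+1) * x = (d:ℝ) * y := by rw [hy, pow_succ]; ring
    rw [hyx] at h1 h2 hr ⊢
    have hNle : (d:ℝ)^(-(N:ℤ)) ≤ 1 := by
      calc (d:ℝ)^(-(N:ℤ)) ≤ (d:ℝ)^(0:ℤ) := zpow_le_zpow_right₀ hq1.le (by omega)
        _ = 1 := zpow_zero _
    have hu1 : (d:ℝ) * y < 1 := by have := hpos (-(N:ℤ)-1); linarith
    have hyq : y < (d:ℝ)⁻¹ := by
      have : (d:ℝ) * y < (d:ℝ) * (d:ℝ)⁻¹ := by rw [hinv]; exact hu1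
      exact lt_of_mul_lt_mul_left this hq0.le
    have hps : ∀ w : ℝ, (d:ℝ)^(k+1) * w = (d:ℝ) * ((d:ℝ)^k * w) := by
      intro w; rw [pow_succ]; ring
    have e6 : (d:ℝ)⁻¹ * (d:ℝ)^(-(N:ℤ)) = (d:ℝ)^(-(N:ℤ)-1) := by
      rw [← zpow_neg_one, ← zpow_add₀ hne]
      congr 1
      ring
    have e7 : (d:ℝ)⁻¹ * (d:ℝ)^(-(N:ℤ)-1) = (d:ℝ)^(-(N:ℤ)-2) := by
      rw [← zpow_neg_one, ← zpow_add₀ hne]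
      congr 1
      ring
    have e8 : (d:ℝ) * (d:ℝ)^(-(N:ℤ)-1) = (d:ℝ)^(-(N:ℤ)) := (zp_mul hd7 (-(N:ℤ))).symm
    have e9 : (d:ℝ) * (d:ℝ)^(-(N:ℤ)-2) = (d:ℝ)^(-(N:ℤ)-1) := by
      rw [zp_mul hd7 (-(N:ℤ)-1), show (-(N:ℤ)-1-1) = (-(N:ℤ)-2) by ring]
    have hkey1 : (d:ℝ)⁻¹ - (d:ℝ)^(-(N:ℤ)-1) ≤ y := by
      have hm := mul_le_mul_of_nonneg_left h1 hv0.le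
      have h' : (d:ℝ)⁻¹ * ((d:ℝ) * y) = y := by field_simp
      have h'' : (d:ℝ)⁻¹ * (1 - (d:ℝ)^(-(N:ℤ))) = (d:ℝ)⁻¹ - (d:ℝ)^(-(N:ℤ)-1) := by
        rw [mul_sub, e6, mul_one]
      linarith
    have hkey2 : y < (d:ℝ)⁻¹ - (d:ℝ)^(-(N:ℤ)-2) := by
      have hm := mul_lt_mul_of_pos_left h2 hv0
      have h' : (d:ℝ)⁻¹ * ((d:ℝ) * y) = y := by field_simp
      have h'' : (d:ℝ)⁻¹ * (1 - (d:ℝ)^(-(N:ℤ)-1)) = (d:ℝ)⁻¹ - (d:ℝ)^(-(N:ℤ)-2) := by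
        rw [mul_sub, e7, mul_one]
      linarith
    have hstep : ∀ w : ℝ, 1 ≤ w → 1 ≤ (d:ℝ) * w := by
      intro w hw
      nlinarith
    have hdv1 : ((d:ℝ)-1) * (d:ℝ)⁻¹ = 1 - (d:ℝ)⁻¹ := by field_simp
    have hdv2 : ((d:ℝ)-2) * (d:ℝ)⁻¹ = 1 - 2*(d:ℝ)⁻¹ := by
      field_simp
    -- specialized versions of IH for index 0
    have IH0a : ∀ z : ℝ, 0 ≤ z → (d:ℝ)^k * z < 1 - 2 * (d:ℝ)⁻¹ →
        (d:ℝ)^k * (T^[h] z) = (d:ℝ)^k * z + (d:ℝ)⁻¹ ∧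
        ∀ i, 0 < i → i < h → 1 ≤ (d:ℝ)^k * T^[i] z := by
      intro z hz hz2
      have e1 : (d:ℝ)^(-((0:ℕ):ℤ)) = 1 := by norm_num
      have e2 : (d:ℝ)^(-((0:ℕ):ℤ) - 1) = (d:ℝ)⁻¹ := by norm_num
      have hzk : 0 ≤ (d:ℝ)^k * z := mul_nonneg (pow_nonneg hq0.le k) hz
      obtain ⟨he, hav⟩ := IH z hz 0 (by rw [e1]; linarith) (by rw [e2]; linarith)
        h (Or.inl ⟨by rw [e2]; exact hz2, by rw [hh]⟩)
      rw [e1, e2] at he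
      refine ⟨by rw [he]; ring, hav⟩
    have IH0b : ∀ z : ℝ, 0 ≤ z → 1 - 2 * (d:ℝ)⁻¹ ≤ (d:ℝ)^k * z →
        (d:ℝ)^k * z < 1 - (d:ℝ)⁻¹ →
        (d:ℝ)^k * (T^[h + a k] z) = (d:ℝ)^k * z + (d:ℝ)⁻¹ ∧
        ∀ i, 0 < i → i < h + a k → 1 ≤ (d:ℝ)^k * T^[i] z := by
      intro z hz hz1 hz2
      have hzk : 0 ≤ (d:ℝ)^k * z := mul_nonneg (pow_nonneg hq0.le k) hz
      have e1 : (d:ℝ)^(-((0:ℕ):ℤ)) = 1 := by norm_num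
      have e2 : (d:ℝ)^(-((0:ℕ):ℤ) - 1) = (d:ℝ)⁻¹ := by norm_num
      obtain ⟨he, hav⟩ := IH z hz 0 (by rw [e1]; linarith) (by rw [e2]; linarith)
        (h + a k) (Or.inr ⟨by rw [e2]; exact hz1, rfl⟩)
      rw [e1, e2] at he
      refine ⟨by rw [he]; ring, hav⟩
    have hdc : ((d - 2 : ℕ):ℝ) = (d:ℝ) - 2 := by
      rw [Nat.cast_sub (by omega)]
      norm_num
    have hd2 : d - 2 + 2 = d := by omega
    -- inner induction: climbing the first d-2 subcolumns
    have main : ∀ j : ℕ, j + 2 ≤ d →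
        (d:ℝ)^k * T^[j * h] x = y + j * (d:ℝ)⁻¹ ∧
        ∀ i, 0 < i → i < j * h → 1 ≤ (d:ℝ)^(k+1) * T^[i] x := by
      intro j
      induction j with
      | zero => exact fun _ => ⟨by simp [hy], by omega⟩
      | succ j ihj =>
        intro hj
        obtain ⟨hje, hjav⟩ := ihj (by omega)
        have hjc : (j:ℝ) + 3 ≤ (d:ℝ) := by exact_mod_cast (show j + 3 ≤ d by omega)
        have hz0 : 0 ≤ T^[j*h] x := by
          by_contra hc
          push_neg at hc
          have h1' : (d:ℝ)^k * T^[j*h] x < 0 := mul_neg_of_pos_of_neg (pow_pos hq0 k) hc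
          have h2' : 0 ≤ y + j * (d:ℝ)⁻¹ := by positivity
          linarith [hje]
        have hz2 : (d:ℝ)^k * T^[j*h] x < 1 - 2 * (d:ℝ)⁻¹ := by
          rw [hje]
          have : ((j:ℝ) + 1) * (d:ℝ)⁻¹ ≤ ((d:ℝ) - 2) * (d:ℝ)⁻¹ :=
            mul_le_mul_of_nonneg_right (by linarith) hv0.le
          rw [hdv2] at this
          nlinarith
        obtain ⟨he, hav⟩ := IH0a (T^[j*h] x) hz0 hz2
        have hit : T^[(j+1)*h] x = T^[h] (T^[j*h] x) := by
          rw [show (j+1)*h = h + j*h by ring, Function.iterate_add_apply]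
        constructor
        · rw [hit, he, hje]
          push_cast
          ring
        · intro i hi0 hilt
          rcases lt_trichotomy i (j*h) with hlt | heq | hgt
          · exact hjav i hi0 hlt
          · subst heq
            have hj1 : 1 ≤ j := by
              by_contra hc
              push_neg at hc
              interval_cases j <;> omega
            have hj1' : (1:ℝ) ≤ (j:ℝ) := by exact_mod_cast hj1
            rw [hps, hje]
            have : (d:ℝ) * (y + (j:ℝ) * (d:ℝ)⁻¹) = (d:ℝ) * y + (j:ℝ) * ((d:ℝ) * (d:ℝ)⁻¹) := by
              ring
            rw [this, hinv]
            have hu0 : 0 ≤ (d:ℝ) * y := by positivity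
            linarith
          · have hi' : i - j*h < h := by
              have := hilt
              have : (j+1)*h = j*h + h := by ring
              omega
            have hsplit : T^[i] x = T^[i - j*h] (T^[j*h] x) := by
              rw [← Function.iterate_add_apply, show i - j*h + j*h = i by omega]
            rw [hps, hsplit]
            exact hstep _ (hav (i - j*h) (by omega) hi')
    obtain ⟨hm1e, hm1av⟩ := main (d - 2) (by omega)
    rw [hdc] at hm1e
    -- the (d-1)-st subcolumn : apply IH0b at T^[(d-2)*h] x
    have hprod : 0 ≤ ((d:ℝ)-2) * (d:ℝ)⁻¹ := mul_nonneg (by linarith) hv0.le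
    have hdiff : ((d:ℝ)-1) * (d:ℝ)⁻¹ - ((d:ℝ)-2) * (d:ℝ)⁻¹ = (d:ℝ)⁻¹ := by ring
    have hz10 : 0 ≤ T^[(d-2)*h] x := by
      by_contra hc
      push_neg at hc
      have h1' : (d:ℝ)^k * T^[(d-2)*h] x < 0 := mul_neg_of_pos_of_neg (pow_pos hq0 k) hc
      linarith [hm1e]
    have hz11 : 1 - 2 * (d:ℝ)⁻¹ ≤ (d:ℝ)^k * T^[(d-2)*h] x := by
      rw [hm1e, ← hdv2]
      linarith
    have hz12 : (d:ℝ)^k * T^[(d-2)*h] x < 1 - (d:ℝ)⁻¹ := by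
      rw [hm1e, ← hdv1]
      linarith
    obtain ⟨hm2e, hm2av⟩ := IH0b (T^[(d-2)*h] x) hz10 hz11 hz12
    rw [hm1e] at hm2e
    -- position of z3 = T^[h + a k] (T^[(d-2)*h] x)
    have hz3e : (d:ℝ)^k * T^[h + a k] (T^[(d-2)*h] x) = y + ((d:ℝ) - 1) * (d:ℝ)⁻¹ := by
      rw [hm2e]; ring
    have hprod1 : 0 ≤ ((d:ℝ)-1) * (d:ℝ)⁻¹ := mul_nonneg (by linarith) hv0.le
    have hz30 : 0 ≤ T^[h + a k] (T^[(d-2)*h] x) := by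
      by_contra hc
      push_neg at hc
      have h1' : (d:ℝ)^k * T^[h + a k] (T^[(d-2)*h] x) < 0 :=
        mul_neg_of_pos_of_neg (pow_pos hq0 k) hc
      linarith [hz3e]
    have hz31 : 1 - (d:ℝ)^(-(N:ℤ)-1) ≤ (d:ℝ)^k * T^[h + a k] (T^[(d-2)*h] x) := by
      rw [hz3e, hdv1]
      linarith
    have hz32 : (d:ℝ)^k * T^[h + a k] (T^[(d-2)*h] x) < 1 - (d:ℝ)^(-(N:ℤ)-2) := by
      rw [hz3e, hdv1]
      linarith
    -- specialized IH at index N+1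
    have ecast1 : (-((N+1:ℕ)):ℤ) = -(N:ℤ)-1 := by push_cast; ring
    have ecast2 : (-((N+1:ℕ)):ℤ) - 1 = -(N:ℤ)-2 := by push_cast; ring
    have IHN := IH (T^[h + a k] (T^[(d-2)*h] x)) hz30 (N+1)
      (by rw [ecast1]; exact hz31) (by rw [ecast2]; exact hz32)
    rw [ecast2, ecast1] at IHN
    -- decompose the iterate count
    have hmul : d * h + a k = h + ((h + a k) + (d-2)*h) := by
      conv_lhs => rw [← hd2]
      ring
    have hcomp : ∀ s : ℕ, T^[s + ((h + a k) + (d-2)*h)] x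
        = T^[s] (T^[h + a k] (T^[(d-2)*h] x)) := by
      intro s
      rw [Function.iterate_add_apply, Function.iterate_add_apply]
    -- avoidance on the first (d-1) subcolumns, i.e. i ≤ (d-2)*h + (h + a k)
    have havlow : ∀ i, 0 < i → i ≤ (d-2)*h + (h + a k) → 1 ≤ (d:ℝ)^(k+1) * T^[i] x := by
      intro i hi0 hile
      rcases lt_trichotomy i ((d-2)*h) with hlt | heq | hgt
      · exact hm1av i hi0 hlt
      · subst heq
        rw [hps, hm1e]
        nlinarith
      · rcases lt_trichotomy i ((d-2)*h + (h + a k)) with hlt' | heq' | hgt'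
        · have hsplit : T^[i] x = T^[i - (d-2)*h] (T^[(d-2)*h] x) := by
            rw [← Function.iterate_add_apply, show i - (d-2)*h + (d-2)*h = i by omega]
          rw [hps, hsplit]
          exact hstep _ (hm2av (i - (d-2)*h) (by omega) (by omega))
        · subst heq'
          have hsplit : T^[(d-2)*h + (h + a k)] x = T^[h + a k] (T^[(d-2)*h] x) := by
            rw [Nat.add_comm, Function.iterate_add_apply]
          rw [hps, hsplit, hz3e]
          nlinarith
        · omega
    -- now the case split
    rcases hr with ⟨hca, hre⟩ | ⟨hcb, hre⟩
    · -- case a : r = chaconHeight d a (k+1)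
      have hkey3 : y < (d:ℝ)⁻¹ - 2 * (d:ℝ)^(-(N:ℤ)-2) := by
        have hm := mul_lt_mul_of_pos_left hca hv0
        have h' : (d:ℝ)⁻¹ * ((d:ℝ) * y) = y := by field_simp
        have h'' : (d:ℝ)⁻¹ * (1 - 2 * (d:ℝ)^(-(N:ℤ)-1))
            = (d:ℝ)⁻¹ - 2 * (d:ℝ)^(-(N:ℤ)-2) := by
          rw [mul_sub, mul_one, show (d:ℝ)⁻¹ * (2 * (d:ℝ)^(-(N:ℤ)-1))
            = 2 * ((d:ℝ)⁻¹ * (d:ℝ)^(-(N:ℤ)-1)) by ring, e7]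
        linarith
      have hsel : (d:ℝ)^k * T^[h + a k] (T^[(d-2)*h] x) < 1 - 2 * (d:ℝ)^(-(N:ℤ)-2) := by
        rw [hz3e, hdv1]
        linarith
      obtain ⟨hfe, hfav⟩ := IHN h (Or.inl ⟨hsel, by rw [hh]⟩)
      have hrval : r = h + ((h + a k) + (d-2)*h) := by
        rw [hre, show chaconHeight d a (k+1) = d * chaconHeight d a k + a k from rfl, ← hh]
        exact hmul
      constructor
      · rw [hrval, hcomp, hps, hfe, hz3e]
        linear_combination ((d:ℝ)-1) * hinv + e8 + e9
      · intro i hi0 hir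
        rw [hrval] at hir
        by_cases hile : i ≤ (d-2)*h + (h + a k)
        · exact havlow i hi0 hile
        · push_neg at hile
          have hsplit := hcomp (i - ((h + a k) + (d-2)*h))
          rw [show i - ((h + a k) + (d-2)*h) + ((h + a k) + (d-2)*h) = i from by omega]
            at hsplit
          rw [hps, hsplit]
          exact hstep _ (hfav _ (by omega) (by omega))
    · -- case b : r = chaconHeight d a (k+1) + a (k+1+N)
      have hkey3 : (d:ℝ)⁻¹ - 2 * (d:ℝ)^(-(N:ℤ)-2) ≤ y := by
        have hm := mul_le_mul_of_nonneg_left hcb hv0.le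
        have h' : (d:ℝ)⁻¹ * ((d:ℝ) * y) = y := by field_simp
        have h'' : (d:ℝ)⁻¹ * (1 - 2 * (d:ℝ)^(-(N:ℤ)-1))
            = (d:ℝ)⁻¹ - 2 * (d:ℝ)^(-(N:ℤ)-2) := by
          rw [mul_sub, mul_one, show (d:ℝ)⁻¹ * (2 * (d:ℝ)^(-(N:ℤ)-1))
            = 2 * ((d:ℝ)⁻¹ * (d:ℝ)^(-(N:ℤ)-1)) by ring, e7]
        linarith
      have hsel : 1 - 2 * (d:ℝ)^(-(N:ℤ)-2)
          ≤ (d:ℝ)^k * T^[h + a k] (T^[(d-2)*h] x) := by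
        rw [hz3e, hdv1]
        linarith
      obtain ⟨hfe, hfav⟩ := IHN (h + a (k + (N+1))) (Or.inr ⟨hsel, rfl⟩)
      have hrval : r = (h + a (k + (N+1))) + ((h + a k) + (d-2)*h) := by
        have hidx : k+1+N = k+(N+1) := by omega
        rw [hre, hidx,
          show chaconHeight d a (k+1) = d * chaconHeight d a k + a k from rfl, ← hh]
        omega
      constructor
      · rw [hrval, hcomp, hps, hfe, hz3e]
        linear_combination ((d:ℝ)-1) * hinv + e8 + e9
      · intro i hi0 hir
        rw [hrval] at hir
        by_cases hile : i ≤ (d-2)*h + (h + a k)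
        · exact havlow i hi0 hile
        · push_neg at hile
          have hsplit := hcomp (i - ((h + a k) + (d-2)*h))
          rw [show i - ((h + a k) + (d-2)*h) + ((h + a k) + (d-2)*h) = i from by omega]
            at hsplit
          rw [hps, hsplit]
          exact hstep _ (hfav _ (by omega) (by omega))

lemma chaconHeight_pos (hd7 : 7 ≤ d) : ∀ m, 1 ≤ chaconHeight d a m := by
  intro m
  induction m with
  | zero => simp [chaconHeight]
  | succ m ih =>
    have h2 := Nat.mul_le_mul (show 1 ≤ d by omega) ih
    simp only [chaconHeight]
    omega

theorem chacon_first_return_time' (hd7 : 7 ≤ d) (ha : ∀ j, a j = 1 ∨ a j = 2)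
    (k : ℕ) (x : ℝ) (hx₀ : 0 ≤ x) (hx₁ : x < (d : ℝ) ^ (-(k : ℤ))) :
    (∃ m : ℕ, 1 ≤ m ∧ (chaconMap d a)^[m] x ∈ Set.Ico (0 : ℝ) ((d : ℝ) ^ (-(k : ℤ)))) ∧
      ∀ N : ℕ,
        1 - (d : ℝ) ^ (-(N : ℤ)) ≤ (d : ℝ) ^ k * x →
        (d : ℝ) ^ k * x < 1 - (d : ℝ) ^ (-(N : ℤ) - 1) →
        ((d : ℝ) ^ k * x < 1 - 2 * (d : ℝ) ^ (-(N : ℤ) - 1) →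
          sInf {m : ℕ | 1 ≤ m ∧ (chaconMap d a)^[m] x ∈ Set.Ico (0 : ℝ) ((d : ℝ) ^ (-(k : ℤ)))}
            = chaconHeight d a k) ∧
        (1 - 2 * (d : ℝ) ^ (-(N : ℤ) - 1) ≤ (d : ℝ) ^ k * x →
          sInf {m : ℕ | 1 ≤ m ∧ (chaconMap d a)^[m] x ∈ Set.Ico (0 : ℝ) ((d : ℝ) ^ (-(k : ℤ)))}
            = chaconHeight d a k + a (k + N)) := by
  have hD : (7:ℝ) ≤ d := by exact_mod_cast hd7
  have hq1 : (1:ℝ) < d := by linarith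
  have hq0 : (0:ℝ) < d := by linarith
  have hpk : (0:ℝ) < (d:ℝ)^k := pow_pos hq0 k
  have hpow1 : (d:ℝ)^k * (d:ℝ)^(-(k:ℤ)) = 1 := by
    rw [pow_mul_zpow hd7]
    simp
  have hpos := zp_pos (d := d) hd7
  have hNle : ∀ N : ℕ, (d:ℝ)^(-(N:ℤ)) ≤ 1 := by
    intro N
    calc (d:ℝ)^(-(N:ℤ)) ≤ (d:ℝ)^(0:ℤ) := zpow_le_zpow_right₀ hq1.le (by omega)
      _ = 1 := zpow_zero _
  set S := {m : ℕ | 1 ≤ m ∧ (chaconMap d a)^[m] x ∈ Set.Ico (0:ℝ) ((d:ℝ)^(-(k:ℤ)))} with hS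
  have main : ∀ N : ℕ, 1 - (d:ℝ)^(-(N:ℤ)) ≤ (d:ℝ)^k * x →
      (d:ℝ)^k * x < 1 - (d:ℝ)^(-(N:ℤ)-1) → ∀ r : ℕ,
      (((d:ℝ)^k * x < 1 - 2*(d:ℝ)^(-(N:ℤ)-1) ∧ r = chaconHeight d a k) ∨
       (1 - 2*(d:ℝ)^(-(N:ℤ)-1) ≤ (d:ℝ)^k * x ∧ r = chaconHeight d a k + a (k+N))) →
      r ∈ S ∧ sInf S = r := by
    intro N h1 h2 r hcase
    obtain ⟨heq, hav⟩ := chacon_key hd7 ha k x hx₀ N h1 h2 r hcase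
    have hr1 : 1 ≤ r := by
      have := chaconHeight_pos (a := a) hd7 k
      rcases hcase with ⟨_, hr⟩ | ⟨_, hr⟩ <;> omega
    have hp1 := hpos (-(N:ℤ)-1)
    have hT0 : 0 ≤ (chaconMap d a)^[r] x := by
      by_contra hc
      push_neg at hc
      have : (d:ℝ)^k * (chaconMap d a)^[r] x < 0 := mul_neg_of_pos_of_neg hpk hc
      linarith [heq]
    have hTlt : (chaconMap d a)^[r] x < (d:ℝ)^(-(k:ℤ)) := by
      have hlt1 : (d:ℝ)^k * (chaconMap d a)^[r] x < (d:ℝ)^k * ((d:ℝ)^(-(k:ℤ))) := by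
        rw [hpow1]
        linarith [heq, hNle N]
      exact lt_of_mul_lt_mul_left hlt1 hpk.le
    have hrS : r ∈ S := ⟨hr1, hT0, hTlt⟩
    refine ⟨hrS, le_antisymm (Nat.sInf_le hrS) ?_⟩
    by_contra hcon
    push_neg at hcon
    obtain ⟨hm1, hm0, hmlt⟩ := Nat.sInf_mem (⟨r, hrS⟩ : S.Nonempty)
    have h1' := hav (sInf S) hm1 hcon
    have hlt2 : (d:ℝ)^k * (chaconMap d a)^[sInf S] x < 1 := by
      calc (d:ℝ)^k * (chaconMap d a)^[sInf S] x
          < (d:ℝ)^k * ((d:ℝ)^(-(k:ℤ))) := mul_lt_mul_of_pos_left hmlt hpk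
        _ = 1 := hpow1
    linarith
  constructor
  · -- existence of a return time
    have hylt : (d:ℝ)^k * x < 1 := by
      have := mul_lt_mul_of_pos_left hx₁ hpk
      rwa [hpow1] at this
    have hSne : {n : ℕ | (d:ℝ)^k * x < 1 - (d:ℝ)^(-(n:ℤ)-1)}.Nonempty := by
      obtain ⟨n, hn⟩ := exists_pow_lt_of_lt_one
        (by linarith : (0:ℝ) < 1 - (d:ℝ)^k * x)
        (by rw [inv_lt_one_iff₀]; right; exact hq1 : (d:ℝ)⁻¹ < 1)
      refine ⟨n, ?_⟩
      have e : ((d:ℝ)⁻¹)^n = (d:ℝ)^(-(n:ℤ)) := by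
        rw [inv_pow, ← zpow_natCast, ← zpow_neg]
      have hb : (d:ℝ)^(-(n:ℤ)-1) ≤ (d:ℝ)^(-(n:ℤ)) :=
        zpow_le_zpow_right₀ hq1.le (by omega)
      show (d:ℝ)^k * x < 1 - (d:ℝ)^(-(n:ℤ)-1)
      rw [e] at hn
      linarith
    have hmem : (d:ℝ)^k * x
        < 1 - (d:ℝ)^(-((sInf {n : ℕ | (d:ℝ)^k * x < 1 - (d:ℝ)^(-(n:ℤ)-1)}:ℕ):ℤ)-1) :=
      Nat.sInf_mem hSne
    set N := sInf {n : ℕ | (d:ℝ)^k * x < 1 - (d:ℝ)^(-(n:ℤ)-1)} with hN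
    have hlow : 1 - (d:ℝ)^(-(N:ℤ)) ≤ (d:ℝ)^k * x := by
      rcases Nat.eq_zero_or_pos N with h0 | hposN
      · rw [h0]
        simpa using mul_nonneg hpk.le hx₀
      · by_contra hcon
        push_neg at hcon
        have hc2 : (-(((N-1:ℕ)):ℤ)) - 1 = -(N:ℤ) := by omega
        have hmm : (N - 1 : ℕ) ∈ {n : ℕ | (d:ℝ)^k * x < 1 - (d:ℝ)^(-(n:ℤ)-1)} := by
          show (d:ℝ)^k * x < 1 - (d:ℝ)^(-((N-1:ℕ):ℤ)-1)
          rw [hc2]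
          exact hcon
        have := Nat.sInf_le hmm
        omega
    by_cases hc : (d:ℝ)^k * x < 1 - 2*(d:ℝ)^(-(N:ℤ)-1)
    · obtain ⟨hrS, _⟩ := main N hlow hmem _ (Or.inl ⟨hc, rfl⟩)
      exact ⟨_, hrS⟩
    · push_neg at hc
      obtain ⟨hrS, _⟩ := main N hlow hmem _ (Or.inr ⟨hc, rfl⟩)
      exact ⟨_, hrS⟩
  · intro N h1 h2
    exact ⟨fun hc => (main N h1 h2 _ (Or.inl ⟨hc, rfl⟩)).2,
           fun hc => (main N h1 h2 _ (Or.inr ⟨hc, rfl⟩)).2⟩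


/-- For every `k` and every `x ∈ A_k = [0, d^{-k})`, the first return time
`r(x) = min{m ≥ 1 : T_α^m(x) ∈ A_k}` exists, and writing `N = N₀(d^k·x)` (where `N₀(y)` is
the unique `n` with `y ∈ [1−d^{-n},1−d^{-(n+1)})`): `r(x) = h_k^α` if
`d^k·x ∈ [1−d^{-N}, 1−2d^{-(N+1)})`, and `r(x) = h_k^α + α_{k+N}` if
`d^k·x ∈ [1−2d^{-(N+1)}, 1−d^{-(N+1)})`. -/
theorem chacon_first_return_time (d : ℕ) (hd_odd : Odd d) (hd7 : 7 ≤ d)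
    (a : ℕ → ℕ) (ha : ∀ j, a j = 1 ∨ a j = 2)
    (k : ℕ) (x : ℝ) (hx₀ : 0 ≤ x) (hx₁ : x < (d : ℝ) ^ (-(k : ℤ))) :
    (∃ m : ℕ, 1 ≤ m ∧ (chaconMap d a)^[m] x ∈ Set.Ico (0 : ℝ) ((d : ℝ) ^ (-(k : ℤ)))) ∧
      ∀ N : ℕ,
        1 - (d : ℝ) ^ (-(N : ℤ)) ≤ (d : ℝ) ^ k * x →
        (d : ℝ) ^ k * x < 1 - (d : ℝ) ^ (-(N : ℤ) - 1) →
        ((d : ℝ) ^ k * x < 1 - 2 * (d : ℝ) ^ (-(N : ℤ) - 1) →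
          sInf {m : ℕ | 1 ≤ m ∧ (chaconMap d a)^[m] x ∈ Set.Ico (0 : ℝ) ((d : ℝ) ^ (-(k : ℤ)))}
            = chaconHeight d a k) ∧
        (1 - 2 * (d : ℝ) ^ (-(N : ℤ) - 1) ≤ (d : ℝ) ^ k * x →
          sInf {m : ℕ | 1 ≤ m ∧ (chaconMap d a)^[m] x ∈ Set.Ico (0 : ℝ) ((d : ℝ) ^ (-(k : ℤ)))}
            = chaconHeight d a k + a (k + N)) :=
  chacon_first_return_time' hd7 ha k x hx₀ hx₁

end
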